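/- arXiv:1605.05463 — 2 statements merged into one kernel-verified Lean document; each statement's English description precedes it below -/
import Mathlib

section
/- Let m, n be coprime natural numbers. Every residually finite group G satisfying aᵐbᵐ = bᵐaᵐ and aⁿbⁿ = bⁿaⁿ for all a, b ∈ G is abelian. -/
/-!
Let `G^k` be the subgroup generated by the `k`-th powers; it is normal, and it centralises the
`k`-th powers when these commute. In `G / G^m` every element is an `n`-th power (as `m` and `n`
are coprime), so this quotient is abelian, i.e. `⁅x, y⁆ ∈ G^m`; likewise `⁅x, y⁆ ∈ G^n`. Hence
`⁅x, y⁆` commutes with `g^m` and `g^n`, hence with `g ∈ ⟨g^m, g^n⟩`: commutators are central.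
In a group of class `≤ 2`, `⁅a^k, b^k⁆ = ⁅a, b⁆^(k*k)`, so the order of `⁅a, b⁆` divides both
`m²` and `n²`.
-/

open scoped commutatorElement

section

variable {G : Type*} [Group G]

theorem mem_of_pow_mem_of_coprime {H : Subgroup G} {g : G} {m n : ℕ} (hmn : m.Coprime n)
    (hm : g ^ m ∈ H) (hn : g ^ n ∈ H) : g ∈ H := by
  have hbez : ((m.gcd n : ℕ) : ℤ) = m * m.gcdA n + n * m.gcdB n := Nat.gcd_eq_gcd_ab m n
  rw [hmn.gcd_eq_one, Nat.cast_one] at hbez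
  rw [← zpow_one g, hbez, zpow_add, zpow_mul, zpow_mul, zpow_natCast, zpow_natCast]
  exact H.mul_mem (H.zpow_mem hm _) (H.zpow_mem hn _)

theorem exists_pow_eq_of_pow_eq_one_of_coprime {x : G} {m n : ℕ} (hmn : m.Coprime n)
    (hx : x ^ m = 1) : ∃ y : G, y ^ n = x := by
  obtain ⟨k, hk⟩ := exists_pow_eq_self_of_coprime
    (hmn.symm.coprime_dvd_right (orderOf_dvd_of_pow_eq_one hx))
  exact ⟨x ^ k, by rw [← pow_mul, mul_comm, pow_mul, hk]⟩

theorem mul_comm_of_pow_eq_one_of_pow_mul_comm {m n : ℕ} (hmn : m.Coprime n)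
    (hm : ∀ x : G, x ^ m = 1) (hn : ∀ a b : G, a ^ n * b ^ n = b ^ n * a ^ n) (a b : G) :
    a * b = b * a := by
  obtain ⟨a', rfl⟩ := exists_pow_eq_of_pow_eq_one_of_coprime hmn (hm a)
  obtain ⟨b', rfl⟩ := exists_pow_eq_of_pow_eq_one_of_coprime hmn (hm b)
  exact hn a' b'

variable (G) in
def powerSubgroup (k : ℕ) : Subgroup G := Subgroup.closure (Set.range (· ^ k))

namespace powerSubgroup

theorem pow_mem (g : G) (k : ℕ) : g ^ k ∈ powerSubgroup G k :=
  Subgroup.subset_closure ⟨g, rfl⟩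

instance normal (k : ℕ) : (powerSubgroup G k).Normal := by
  refine Subgroup.normalizer_eq_top_iff.mp (top_le_iff.mp ?_)
  refine Subgroup.le_normalizer_closure_iff.mpr ?_
  rintro h - _ ⟨a, rfl⟩
  exact conj_pow (a := h) (b := a) ▸ pow_mem _ k

theorem le_centralizer {k : ℕ} (hk : ∀ a b : G, a ^ k * b ^ k = b ^ k * a ^ k) :
    powerSubgroup G k ≤ Subgroup.centralizer (Set.range (· ^ k)) := by
  rw [powerSubgroup, Subgroup.closure_le]
  rintro _ ⟨a, rfl⟩ _ ⟨b, rfl⟩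
  exact hk b a

theorem commutatorElement_mem {m n : ℕ} (hmn : m.Coprime n)
    (hn : ∀ a b : G, a ^ n * b ^ n = b ^ n * a ^ n) (x y : G) :
    ⁅x, y⁆ ∈ powerSubgroup G m := by
  have hquot := mul_comm_of_pow_eq_one_of_pow_mul_comm (G := G ⧸ powerSubgroup G m) hmn
    (QuotientGroup.mk_surjective.forall.mpr fun g ↦
      (QuotientGroup.eq_one_iff _).mpr (pow_mem g m))
    (QuotientGroup.mk_surjective.forall₂.mpr fun a b ↦ congrArg QuotientGroup.mk (hn a b))
  rw [← QuotientGroup.eq_one_iff, ← QuotientGroup.mk'_apply, map_commutatorElement,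
    commutatorElement_eq_one_iff_mul_comm]
  exact hquot ..

end powerSubgroup

theorem commutatorElement_pow_right_of_mem_center {a b : G} (h : ⁅a, b⁆ ∈ Subgroup.center G)
    (l : ℕ) : ⁅a, b ^ l⁆ = ⁅a, b⁆ ^ l := by
  have hconj : a * b * a⁻¹ = ⁅a, b⁆ * b := by rw [commutatorElement_def]; group
  have hcomm : Commute ⁅a, b⁆ b := Subgroup.mem_center_iff.mp h b |>.symm
  rw [commutatorElement_def, ← conj_pow, hconj, hcomm.mul_pow, mul_inv_cancel_right]

theorem commutatorElement_pow_pow_of_mem_center {a b : G} (h : ⁅a, b⁆ ∈ Subgroup.center G)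
    (k l : ℕ) : ⁅a ^ k, b ^ l⁆ = ⁅a, b⁆ ^ (k * l) := by
  have hba : ⁅b ^ l, a⁆ ∈ Subgroup.center G := by
    rw [← commutatorElement_inv, commutatorElement_pow_right_of_mem_center h]
    exact inv_mem (pow_mem h l)
  rw [← commutatorElement_inv, commutatorElement_pow_right_of_mem_center hba,
    ← commutatorElement_inv, inv_pow, inv_inv, commutatorElement_pow_right_of_mem_center h,
    ← pow_mul, mul_comm]

theorem commutatorElement_mem_center_of_coprime {m n : ℕ} (hmn : m.Coprime n)
    (hm : ∀ a b : G, a ^ m * b ^ m = b ^ m * a ^ m)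
    (hn : ∀ a b : G, a ^ n * b ^ n = b ^ n * a ^ n) (x y : G) :
    ⁅x, y⁆ ∈ Subgroup.center G := by
  have hzm := powerSubgroup.le_centralizer hm (powerSubgroup.commutatorElement_mem hmn hn x y)
  have hzn := powerSubgroup.le_centralizer hn
    (powerSubgroup.commutatorElement_mem hmn.symm hm x y)
  refine Subgroup.mem_center_iff.mpr fun g ↦ ?_
  refine Subgroup.mem_centralizer_singleton_iff.mp (mem_of_pow_mem_of_coprime hmn ?_ ?_)
  · exact Subgroup.mem_centralizer_singleton_iff.mpr (hzm _ ⟨g, rfl⟩)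
  · exact Subgroup.mem_centralizer_singleton_iff.mpr (hzn _ ⟨g, rfl⟩)

end

theorem residually_finite_abelian_of_coprime_powers_commute_general (G : Type*) [Group G]
    (m n : ℕ) (hmn : Nat.Coprime m n)
    (hm : ∀ a b : G, a ^ m * b ^ m = b ^ m * a ^ m)
    (hn : ∀ a b : G, a ^ n * b ^ n = b ^ n * a ^ n) :
    ∀ a b : G, a * b = b * a := by
  intro a b
  have hcen := commutatorElement_mem_center_of_coprime hmn hm hn a b
  have hpow : ∀ k, (∀ a b : G, a ^ k * b ^ k = b ^ k * a ^ k) → ⁅a, b⁆ ^ (k * k) = 1 :=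
    fun k hk ↦ by
      rw [← commutatorElement_pow_pow_of_mem_center hcen, commutatorElement_eq_one_iff_mul_comm]
      exact hk a b
  have hcop : (m * m).Coprime (n * n) := (hmn.mul_right hmn).mul_left (hmn.mul_right hmn)
  rw [← commutatorElement_eq_one_iff_mul_comm, ← pow_one ⁅a, b⁆, ← hcop.gcd_eq_one]
  exact pow_gcd_eq_one.mpr ⟨hpow m hm, hpow n hn⟩

theorem residually_finite_abelian_of_coprime_powers_commute (G : Type*) [Group G]
    (m n : ℕ) (hmn : Nat.Coprime m n)
    (hres : ∀ g : G, g ≠ 1 → ∃ N : Subgroup G, N.Normal ∧ g ∉ N ∧ Finite (G ⧸ N))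
    (hm : ∀ a b : G, a ^ m * b ^ m = b ^ m * a ^ m)
    (hn : ∀ a b : G, a ^ n * b ^ n = b ^ n * a ^ n) :
    ∀ a b : G, a * b = b * a :=
  residually_finite_abelian_of_coprime_powers_commute_general G m n hmn hm hn
end

section
/- Let m, n be coprime natural numbers. If G is a nilpotent group satisfying aᵐbᵐ = bᵐaᵐ and aⁿbⁿ = bⁿaⁿ for all a, b ∈ G, then the torsion subgroup T(G) of G is an abelian normal subgroup. -/
/-!
Every torsion element `x` splits as `x = u * v` with `u, v` powers of `x`, the order of `u` dividing
a power of `m` and the order of `v` coprime to `m`. Then `v` is an `m`-th power and, as `m` and `n`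
are coprime, `u` is an `n`-th power. For two torsion elements `x = u * v` and `y = u' * v'`, the
factors `u, u'` commute as `n`-th powers, `v, v'` as `m`-th powers, and `u` with `v'` (and `u'`
with `v`) because their orders are coprime: in a nilpotent group, elements of coprime orders
commute, by induction on the nilpotency class, since a central commutator `⁅x, y⁆` has order
dividing both `orderOf x` and `orderOf y`. So the torsion elements commute pairwise, and therefore
form a subgroup, which is normal because conjugation preserves orders.
-/

open Subgroup
open scoped commutatorElement

theorem Nat.exists_mul_eq_dvd_pow_coprime (m : ℕ) {d : ℕ} (hd : d ≠ 0) :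
    ∃ a b k : ℕ, a * b = d ∧ a ∣ m ^ k ∧ b.Coprime m := by
  induction d using Nat.strong_induction_on with
  | _ d ih =>
    by_cases hdm : d.Coprime m
    · exact ⟨1, d, 0, one_mul d, one_dvd _, hdm⟩
    have hd0 : 0 < d := Nat.pos_of_ne_zero hd
    have hg : 1 < d.gcd m := lt_of_le_of_ne (Nat.gcd_pos_of_pos_left m hd0) (Ne.symm hdm)
    obtain ⟨a, b, k, hab, hak, hbm⟩ := ih (d / d.gcd m) (Nat.div_lt_self hd0 hg)
      (Nat.div_pos (Nat.gcd_le_left m hd0) (Nat.zero_lt_of_lt hg)).ne'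
    refine ⟨d.gcd m * a, b, k + 1, ?_, ?_, hbm⟩
    · rw [mul_assoc, hab, Nat.mul_div_cancel' (Nat.gcd_dvd_left d m)]
    · rw [pow_succ']
      exact mul_dvd_mul (Nat.gcd_dvd_right d m) hak

section

variable {G : Type*} [Group G]

theorem exists_mul_eq_orderOf_dvd_of_orderOf_eq_mul {x : G} {a b : ℕ} (hab : a.Coprime b)
    (hx : orderOf x = a * b) : ∃ u v : G, x = u * v ∧ orderOf u ∣ a ∧ orderOf v ∣ b := by
  have hbezout : (a : ℤ) * a.gcdA b + b * a.gcdB b = 1 := by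
    rw [← Nat.gcd_eq_gcd_ab, hab, Nat.cast_one]
  have hpow : ∀ (c d : ℕ) (s : ℤ), c * d = a * b → (x ^ ((d : ℤ) * s)) ^ c = 1 := by
    intro c d s hcd
    rw [← zpow_natCast, ← zpow_mul, mul_right_comm, ← Nat.cast_mul, mul_comm d, hcd, zpow_mul,
      zpow_natCast, ← hx, pow_orderOf_eq_one, one_zpow]
  refine ⟨x ^ ((b : ℤ) * a.gcdB b), x ^ ((a : ℤ) * a.gcdA b), ?_, ?_, ?_⟩
  · rw [← zpow_add, add_comm, hbezout, zpow_one]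
  · exact orderOf_dvd_of_pow_eq_one (hpow a b _ rfl)
  · exact orderOf_dvd_of_pow_eq_one (hpow b a _ (mul_comm b a))

theorem IsOfFinOrder.exists_mul_eq_orderOf_dvd_pow_coprime {x : G} (hx : IsOfFinOrder x) (m : ℕ) :
    ∃ u v : G, x = u * v ∧ (∃ k, orderOf u ∣ m ^ k) ∧ (orderOf v).Coprime m := by
  obtain ⟨a, b, k, hab, hak, hbm⟩ := Nat.exists_mul_eq_dvd_pow_coprime m hx.orderOf_pos.ne'
  have hcop : a.Coprime b := ((hbm.pow_right k).coprime_dvd_right hak).symm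
  obtain ⟨u, v, rfl, hua, hvb⟩ := exists_mul_eq_orderOf_dvd_of_orderOf_eq_mul hcop hab.symm
  exact ⟨u, v, rfl, ⟨k, hua.trans hak⟩, hbm.coprime_dvd_left hvb⟩

theorem exists_pow_eq_of_coprime_orderOf {n : ℕ} {x : G} (h : n.Coprime (orderOf x)) :
    ∃ a : G, a ^ n = x := by
  obtain ⟨k, hk⟩ := exists_pow_eq_self_of_coprime h
  exact ⟨x ^ k, by rw [← pow_mul, mul_comm, pow_mul, hk]⟩

theorem commutatorElement_pow_left_of_mem_center {x y : G} (h : ⁅x, y⁆ ∈ center G) (k : ℕ) :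
    ⁅x ^ k, y⁆ = ⁅x, y⁆ ^ k := by
  induction k with
  | zero => rw [pow_zero, pow_zero, commutatorElement_one_left]
  | succ k ih =>
    rw [pow_succ', commutatorElement_mul_left_eq_conj_mul, ih,
      mem_center_iff.mp (pow_mem h k) x, mul_inv_cancel_right, pow_succ]

theorem orderOf_commutatorElement_dvd_left_of_mem_center {x y : G} (h : ⁅x, y⁆ ∈ center G) :
    orderOf ⁅x, y⁆ ∣ orderOf x :=
  orderOf_dvd_of_pow_eq_one <| by
    rw [← commutatorElement_pow_left_of_mem_center h, pow_orderOf_eq_one,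
      commutatorElement_one_left]

theorem orderOf_commutatorElement_dvd_right_of_mem_center {x y : G} (h : ⁅x, y⁆ ∈ center G) :
    orderOf ⁅x, y⁆ ∣ orderOf y := by
  have h' : ⁅y, x⁆ ∈ center G := by
    rw [← commutatorElement_inv]
    exact inv_mem h
  rw [← commutatorElement_inv, orderOf_inv]
  exact orderOf_commutatorElement_dvd_left_of_mem_center h'

theorem commute_of_commutatorElement_mem_center_of_coprime {x y : G} (h : ⁅x, y⁆ ∈ center G)
    (hxy : (orderOf x).Coprime (orderOf y)) : Commute x y := by
  have hdvd : orderOf ⁅x, y⁆ ∣ 1 := hxy ▸ Nat.dvd_gcd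
    (orderOf_commutatorElement_dvd_left_of_mem_center h)
    (orderOf_commutatorElement_dvd_right_of_mem_center h)
  exact commutatorElement_eq_one_iff_commute.mp (orderOf_eq_one_iff.mp (Nat.dvd_one.mp hdvd))

theorem Group.IsNilpotent.commute_of_coprime_orderOf [Group.IsNilpotent G] {x y : G}
    (hxy : (orderOf x).Coprime (orderOf y)) : Commute x y := by
  refine nilpotent_center_quotient_ind (P := fun G _ _ => ∀ x y : G,
    (orderOf x).Coprime (orderOf y) → Commute x y) G (fun G _ _ x y _ => Subsingleton.elim _ _)
    (fun G _ _ ih x y hxy => ?_) x y hxy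
  have hquot : Commute (x : G ⧸ center G) y := ih _ _ <|
    (hxy.coprime_dvd_left (orderOf_map_dvd (QuotientGroup.mk' _) x)).coprime_dvd_right
      (orderOf_map_dvd (QuotientGroup.mk' _) y)
  refine commute_of_commutatorElement_mem_center_of_coprime ?_ hxy
  rw [← QuotientGroup.eq_one_iff]
  exact commutatorElement_eq_one_iff_commute.mpr hquot

theorem commute_of_coprime_orderOf_of_pow_commute {m : ℕ}
    (hm : ∀ a b : G, a ^ m * b ^ m = b ^ m * a ^ m)
    {x y : G} (hx : (orderOf x).Coprime m) (hy : (orderOf y).Coprime m) : Commute x y := by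
  obtain ⟨a, rfl⟩ := exists_pow_eq_of_coprime_orderOf hx.symm
  obtain ⟨b, rfl⟩ := exists_pow_eq_of_coprime_orderOf hy.symm
  exact hm a b

theorem commute_of_isOfFinOrder_of_pow_commute [Group.IsNilpotent G] {m n : ℕ} (hmn : m.Coprime n)
    (hm : ∀ a b : G, a ^ m * b ^ m = b ^ m * a ^ m)
    (hn : ∀ a b : G, a ^ n * b ^ n = b ^ n * a ^ n)
    {x y : G} (hx : IsOfFinOrder x) (hy : IsOfFinOrder y) : Commute x y := by
  obtain ⟨u, v, rfl, ⟨k, hu⟩, hv⟩ := hx.exists_mul_eq_orderOf_dvd_pow_coprime m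
  obtain ⟨u', v', rfl, ⟨k', hu'⟩, hv'⟩ := hy.exists_mul_eq_orderOf_dvd_pow_coprime m
  have huu' : Commute u u' := commute_of_coprime_orderOf_of_pow_commute hn
    ((hmn.pow_left k).coprime_dvd_left hu) ((hmn.pow_left k').coprime_dvd_left hu')
  have hvv' : Commute v v' := commute_of_coprime_orderOf_of_pow_commute hm hv hv'
  have huv' : Commute u v' := Group.IsNilpotent.commute_of_coprime_orderOf
    ((hv'.pow_right k).coprime_dvd_right hu).symm
  have hvu' : Commute v u' := Group.IsNilpotent.commute_of_coprime_orderOf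
    ((hv.pow_right k').coprime_dvd_right hu')
  exact (huu'.mul_right huv').mul_left (hvu'.mul_right hvv')

end

theorem nilpotent_torsion_normal_abelian (G : Type*) [Group G] [Group.IsNilpotent G]
    (m n : ℕ) (hmn : Nat.Coprime m n)
    (hm : ∀ a b : G, a ^ m * b ^ m = b ^ m * a ^ m)
    (hn : ∀ a b : G, a ^ n * b ^ n = b ^ n * a ^ n) :
    ∃ T : Subgroup G, (∀ x : G, x ∈ T ↔ IsOfFinOrder x) ∧ T.Normal ∧
      ∀ x y : G, x ∈ T → y ∈ T → x * y = y * x := by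
  have hcomm {x y : G} (hx : IsOfFinOrder x) (hy : IsOfFinOrder y) : Commute x y :=
    commute_of_isOfFinOrder_of_pow_commute hmn hm hn hx hy
  refine ⟨{ carrier := {x | IsOfFinOrder x}
            one_mem' := IsOfFinOrder.one
            mul_mem' := fun hx hy => (hcomm hx hy).isOfFinOrder_mul hx hy
            inv_mem' := IsOfFinOrder.inv },
    fun _ => Iff.rfl, ⟨fun x hx g => (MulAut.conj g).toMonoidHom.isOfFinOrder hx⟩,
    fun _ _ hx hy => hcomm hx hy⟩
end
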